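/- arXiv:2307.16864 — 3 statements merged into one kernel-verified Lean document; each statement's English description precedes it below -/
import Mathlib

section
/- In a single-crossing approval profile, let a, c' ∈ C be alternatives, [i,j] and [i',j'] voter intervals, and let b, d ∈ Sub(a) with b ∈ Earlier(d) and leftmost(d) ≤ j. If b ∈ U(a,i,j,c',i',j'), then d ∈ U(a,i,j,c',i',j'). -/
/-- An approval profile with voters `1,…,n` (in their natural, single-crossing order)
and alternatives `C`, where the approval set of each alternative is a nonempty
interval of consecutive voters (the single-crossing property). -/
structure SCApprovalProfile (n : ℕ) (C : Type) [Fintype C] [DecidableEq C] where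
  app : C → Finset ℕ
  app_nonempty : ∀ c, (app c).Nonempty
  app_subset : ∀ c, app c ⊆ Finset.Icc 1 n
  app_interval : ∀ c, ∀ u v w : ℕ, u ∈ app c → w ∈ app c → u ≤ v → v ≤ w → v ∈ app c

namespace SCApprovalProfile

variable {n : ℕ} {C : Type} [Fintype C] [DecidableEq C]

/-- The first voter approving `c`. -/
def leftmost (P : SCApprovalProfile n C) (c : C) : ℕ :=
  (P.app c).min' (P.app_nonempty c)

/-- The last voter approving `c`. -/
def rightmost (P : SCApprovalProfile n C) (c : C) : ℕ :=
  (P.app c).max' (P.app_nonempty c)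

/-- `a` dominates `b` iff `A(b) ⊊ A(a)`; i.e. `a ∈ Dom(b)` and `b ∈ Sub(a)`. -/
def Dominates (P : SCApprovalProfile n C) (a b : C) : Prop := P.app b ⊂ P.app a

/-- `a` and `b` are incomparable: `b ∉ Dom(a) ∪ Sub(a) ∪ {a}`. -/
def Incomparable (P : SCApprovalProfile n C) (a b : C) : Prop :=
  ¬ P.Dominates b a ∧ ¬ P.Dominates a b ∧ b ≠ a

/-- `a ∈ Earlier(b)`: `a` and `b` are incomparable and `leftmost(a) < leftmost(b)`. -/
def EarlierThan (P : SCApprovalProfile n C) (a b : C) : Prop :=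
  P.Incomparable a b ∧ P.leftmost a < P.leftmost b

/-- A partial solution with respect to the voter interval `[lo,hi] ⊆ V`:
a committee of at most `k` alternatives together with a partial assignment of the
voters of `[lo,hi]` to committee members, assigning at most `⌈n/k⌉` voters to each
alternative. -/
structure PartialSolution (P : SCApprovalProfile n C) (k lo hi : ℕ) where
  committee : Finset C
  assign : ℕ → Option C
  interval_subset : Finset.Icc lo hi ⊆ Finset.Icc 1 n
  committee_card : committee.card ≤ k
  assign_mem : ∀ v : ℕ, (assign v).isSome → v ∈ Finset.Icc lo hi
  assign_committee : ∀ v : ℕ, ∀ c : C, assign v = some c → c ∈ committee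
  assign_capacity : ∀ a : C,
    ((Finset.Icc lo hi).filter (fun v => assign v = some a)).card ≤ (n + k - 1) / k

/-- The misrepresentation a (partially) assigned voter contributes. -/
def voterCost (P : SCApprovalProfile n C) (σ : ℕ → Option C) (v : ℕ) : ℕ :=
  (σ v).elim 0 (fun c => if v ∈ P.app c then 0 else 1)

/-- The total misrepresentation `ρ(σ)` of a partial assignment. -/
def misrep (P : SCApprovalProfile n C) (σ : ℕ → Option C) : ℕ :=
  ∑ v ∈ Finset.Icc 1 n, P.voterCost σ v

/-- Voter `v` is happy with `c`: `σ(v) = c` and `v ∈ A(c)`. -/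
def Happy (P : SCApprovalProfile n C) (σ : ℕ → Option C) (v : ℕ) (c : C) : Prop :=
  σ v = some c ∧ v ∈ P.app c

/-- `σ̂⁻¹(a)`: the set of voters happily assigned to `a`. -/
def happySet (P : SCApprovalProfile n C) (σ : ℕ → Option C) (a : C) : Finset ℕ :=
  (Finset.Icc 1 n).filter (fun v => σ v = some a ∧ v ∈ P.app a)

/-- The partial solution `S` is monotone with respect to a set `A` of alternatives. -/
def MonotoneWrt {k lo hi : ℕ} (P : SCApprovalProfile n C)
    (S : PartialSolution P k lo hi) (A : Set C) : Prop :=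
  (∀ c ∈ S.committee, ∀ d : C, P.Dominates d c → d ∈ A → d ∈ S.committee) ∧
  (∀ a ∈ A, ∀ b ∈ A, P.Dominates a b →
    (∃ v ∈ Finset.Icc lo hi, P.Happy S.assign v b) →
    (∃ v ∈ Finset.Icc lo hi, P.Happy S.assign v a))

/-- The partial solution `S` is neatly ordered (NT). -/
def NeatlyOrdered {k lo hi : ℕ} (P : SCApprovalProfile n C)
    (S : PartialSolution P k lo hi) : Prop :=
  ∀ a b : C, ∀ (ha : (P.happySet S.assign a).Nonempty)
    (hb : (P.happySet S.assign b).Nonempty),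
    (P.EarlierThan a b →
      (P.happySet S.assign a).max' ha < (P.happySet S.assign b).min' hb) ∧
    (P.Dominates a b →
      ∀ i ∈ P.happySet S.assign a, i < P.leftmost b ∨ (P.happySet S.assign b).max' hb < i)

/-- A finite set of voters is a voter interval if it consists of consecutive voters. -/
def IsVoterInterval (I : Finset ℕ) : Prop :=
  ∀ u v w : ℕ, u ∈ I → w ∈ I → u ≤ v → v ≤ w → v ∈ I

/-- The voter interval `I` is good for the alternative `a` with respect to `S`. -/
def GoodFor {k lo hi : ℕ} (P : SCApprovalProfile n C)
    (S : PartialSolution P k lo hi) (a : C) (I : Finset ℕ) : Prop :=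
  IsVoterInterval I ∧
  (P.happySet S.assign a = ∅ → I = ∅) ∧
  P.happySet S.assign a ⊆ I ∧
  I ⊆ P.app a ∧
  (∀ v ∈ I, ∀ c : C, P.Happy S.assign v c → ¬ P.Incomparable c a) ∧
  I ⊆ Finset.Icc lo hi

/-- A collection of intervals, indexed by an enumeration `e` of the committee,
is good for the partial solution `S`. -/
def GoodCollection {k lo hi t : ℕ} (P : SCApprovalProfile n C)
    (S : PartialSolution P k lo hi) (e : Fin t → C) (I : Fin t → Finset ℕ) : Prop :=
  (∀ ℓ : Fin t, P.GoodFor S (e ℓ) (I ℓ)) ∧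
  (∀ p q : Fin t, P.Incomparable (e p) (e q) → Disjoint (I p) (I q)) ∧
  (∀ s r : Fin t, P.Dominates (e s) (e r) → I s ⊆ I r ∨ Disjoint (I s) (I r))

/-- The right endpoint `j` of a voter interval (`0` for the empty interval). -/
def intervalSup (I : Finset ℕ) : ℕ := WithBot.unbotD 0 I.max

/-- The left endpoint `i` of a voter interval (`0` for the empty interval). -/
def intervalInf (I : Finset ℕ) : ℕ := WithTop.untopD 0 I.min

/-- The signature `Sig(I) = (j_1,…,j_t,−i_1,…,−i_t)` of a collection of intervals. -/
def sig {t : ℕ} (I : Fin t → Finset ℕ) : List ℤ :=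
  ((List.finRange t).map fun ℓ => (intervalSup (I ℓ) : ℤ)) ++
  ((List.finRange t).map fun ℓ => -(intervalInf (I ℓ) : ℤ))

/-- `Sig(I) ≤_lex Sig(I')`. -/
def SigLE {t : ℕ} (I I' : Fin t → Finset ℕ) : Prop :=
  sig I = sig I' ∨ List.Lex (· < ·) (sig I) (sig I')

/-- A good collection of intervals is maximally good if its signature is
lexicographically maximal among all good collections. -/
def MaximallyGood {k lo hi t : ℕ} (P : SCApprovalProfile n C)
    (S : PartialSolution P k lo hi) (e : Fin t → C) (I : Fin t → Finset ℕ) : Prop :=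
  P.GoodCollection S e I ∧
  ∀ I' : Fin t → Finset ℕ, P.GoodCollection S e I' → SigLE I' I

/-- `(P.levelAux W i).1` is the level set `level_W(i+1)` and `(P.levelAux W i).2`
is the union `level_W(1) ∪ … ∪ level_W(i+1)`. -/
def levelAux (P : SCApprovalProfile n C) (W : Finset C) : ℕ → Set C × Set C
  | 0 =>
      let l1 : Set C := {c | c ∈ W ∧ ∀ d : C, ¬ P.Dominates d c}
      (l1, l1)
  | (i+1) =>
      let p := P.levelAux W i
      let li : Set C := {c | c ∈ W ∧ (∃ d ∈ p.1, P.Dominates d c) ∧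
        ∀ d : C, P.Dominates d c → d ∈ W → d ∈ p.2}
      (li, p.2 ∪ li)

/-- `e` enumerates `W` in the canonical ordering: levels come in increasing order
and, within a level, alternatives are ordered by their first approving voter. -/
def IsCanonicalEnum {t : ℕ} (P : SCApprovalProfile n C) (W : Finset C)
    (e : Fin t → C) : Prop :=
  Function.Injective e ∧ (∀ c : C, c ∈ W ↔ ∃ ℓ : Fin t, e ℓ = c) ∧
  ∀ p q : Fin t, p < q → ∀ lp lq : ℕ,
    e p ∈ (P.levelAux W lp).1 → e q ∈ (P.levelAux W lq).1 →
    lp < lq ∨ (lp = lq ∧ P.leftmost (e p) ≤ P.leftmost (e q))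

/-- The alternative `a` is usable for the six-tuple `(c,i,j,c',i',j')`. -/
def UsableFor (P : SCApprovalProfile n C) (a : C) (c : C) (i j : ℕ)
    (c' : C) (i' j' : ℕ) : Prop :=
  P.Dominates c a ∧ (Finset.Icc i j ∩ P.app a).Nonempty ∧
  ( i ≤ P.leftmost a ∨
    (i' ≤ P.leftmost a ∧ P.leftmost a < i ∧
      ∀ b : C, P.Dominates b a → P.Dominates c' b → P.EarlierThan b c →
        P.leftmost b < i' ∧ ∃ b' : C, P.EarlierThan b' c' ∧ P.Dominates b' b) ∨
    (P.leftmost a < i' ∧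
      ∀ b : C, P.Dominates b a → P.Incomparable b c → P.EarlierThan c b) )

/-- The usable set `U(c,i,j,c',i',j')`. -/
def USet (P : SCApprovalProfile n C) (c : C) (i j : ℕ) (c' : C) (i' j' : ℕ) : Set C :=
  {a | ((P.Dominates c' c ∨ c' = c) ∧
        Finset.Icc i j ⊆ P.app c ∩ Finset.Icc i' j' ∧
        Finset.Icc i' j' ⊆ P.app c') ∧
       P.UsableFor a c i j c' i' j'}

end SCApprovalProfile

namespace SCApprovalProfile

section Aux

variable {n : ℕ} {C : Type} [Fintype C] [DecidableEq C] (P : SCApprovalProfile n C)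

lemma aux_leftmost_mem (c : C) : P.leftmost c ∈ P.app c := Finset.min'_mem _ _

lemma aux_rightmost_mem (c : C) : P.rightmost c ∈ P.app c := Finset.max'_mem _ _

lemma aux_leftmost_le {c : C} {v : ℕ} (h : v ∈ P.app c) : P.leftmost c ≤ v :=
  Finset.min'_le _ _ h

lemma aux_le_rightmost {c : C} {v : ℕ} (h : v ∈ P.app c) : v ≤ P.rightmost c :=
  Finset.le_max' _ _ h

lemma aux_mem_between {c : C} {u : ℕ} (h1 : P.leftmost c ≤ u) (h2 : u ≤ P.rightmost c) :
    u ∈ P.app c :=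
  P.app_interval c _ u _ (P.aux_leftmost_mem c) (P.aux_rightmost_mem c) h1 h2

lemma aux_subset {a b : C} (h1 : P.leftmost a ≤ P.leftmost b)
    (h2 : P.rightmost b ≤ P.rightmost a) : P.app b ⊆ P.app a := fun v hv =>
  P.aux_mem_between (h1.trans (P.aux_leftmost_le hv)) ((P.aux_le_rightmost hv).trans h2)

lemma aux_dom_of_lt {a b : C} (h1 : P.leftmost a < P.leftmost b)
    (h2 : P.rightmost b ≤ P.rightmost a) : P.Dominates a b := by
  refine Finset.ssubset_iff_subset_ne.mpr ⟨P.aux_subset h1.le h2, fun h => ?_⟩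
  have : P.leftmost b ≤ P.leftmost a := P.aux_leftmost_le (h ▸ P.aux_leftmost_mem a)
  omega

lemma aux_dom_left {a b : C} (h : P.Dominates a b) : P.leftmost a ≤ P.leftmost b :=
  P.aux_leftmost_le ((Finset.ssubset_iff_subset_ne.mp h).1 (P.aux_leftmost_mem b))

lemma aux_dom_right {a b : C} (h : P.Dominates a b) : P.rightmost b ≤ P.rightmost a :=
  P.aux_le_rightmost ((Finset.ssubset_iff_subset_ne.mp h).1 (P.aux_rightmost_mem b))

end Aux

/-- If `b, d ∈ Sub(a)` with `b ∈ Earlier(d)` and `leftmost(d) ≤ j`,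
then `b ∈ U(a,i,j,c',i',j')` implies `d ∈ U(a,i,j,c',i',j')`. -/
theorem usable_of_earlier_usable
    {n : ℕ} {C : Type} [Fintype C] [DecidableEq C] (hn : 0 < n)
    (P : SCApprovalProfile n C)
    (a c' : C) (i j i' j' : ℕ) (b d : C)
    (hb : P.Dominates a b) (hd : P.Dominates a d)
    (hbd : P.EarlierThan b d) (hdj : P.leftmost d ≤ j)
    (hbU : b ∈ P.USet a i j c' i' j') :
    d ∈ P.USet a i j c' i' j' := by
  obtain ⟨houter, hDab, hne, hcase⟩ := hbU
  have lab : P.leftmost a ≤ P.leftmost b := P.aux_dom_left hb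
  have lbd : P.leftmost b < P.leftmost d := hbd.2
  have rbd : P.rightmost b ≤ P.rightmost d := by
    by_contra h
    exact hbd.1.2.1 (P.aux_dom_of_lt lbd (le_of_not_ge h))
  obtain ⟨v, hv⟩ := hne
  simp only [Finset.mem_inter, Finset.mem_Icc] at hv
  obtain ⟨⟨hiv, hvj⟩, hvb⟩ := hv
  have hij : i ≤ j := hiv.trans hvj
  have hird : i ≤ P.rightmost d := hiv.trans ((P.aux_le_rightmost hvb).trans rbd)
  have hdom_trans : ∀ e : C, P.Dominates e d → P.leftmost e ≤ P.leftmost b →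
      P.Dominates e b := by
    intro e he hle
    have hre : P.rightmost b ≤ P.rightmost e := rbd.trans (P.aux_dom_right he)
    rcases lt_or_eq_of_le hle with h | h
    · exact P.aux_dom_of_lt h hre
    · refine Finset.ssubset_iff_subset_ne.mpr ⟨P.aux_subset h.le hre, fun heq => ?_⟩
      have he' : P.app d ⊂ P.app e := he
      rw [← heq] at he'
      exact hbd.1.2.1 he'
  refine ⟨houter, hd, ⟨max i (P.leftmost d), ?_⟩, ?_⟩
  · simp only [Finset.mem_inter, Finset.mem_Icc]
    exact ⟨⟨le_max_left _ _, max_le hij hdj⟩,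
      P.aux_mem_between (le_max_right _ _)
        (max_le hird (P.aux_le_rightmost (P.aux_leftmost_mem d)))⟩
  by_cases hid : i ≤ P.leftmost d
  · exact Or.inl hid
  push_neg at hid
  rcases hcase with hcb | ⟨hi'b, _hbi, H⟩ | ⟨hbi', H⟩
  · exact absurd (hcb.trans lbd.le) (not_le.mpr hid)
  · refine Or.inr (Or.inl ⟨hi'b.trans lbd.le, hid, ?_⟩)
    intro e hed hc'e hea
    exact H e (hdom_trans e hed (hea.2.trans_le lab).le) hc'e hea
  · by_cases hdi' : P.leftmost d < i'
    · refine Or.inr (Or.inr ⟨hdi', ?_⟩)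
      intro e hed hia
      by_cases hle : P.leftmost e ≤ P.leftmost b
      · exact H e (hdom_trans e hed hle) hia
      · push_neg at hle
        exact ⟨⟨hia.2.1, hia.1, hia.2.2.symm⟩, lab.trans_lt hle⟩
    · push_neg at hdi'
      refine Or.inr (Or.inl ⟨hdi', hid, ?_⟩)
      intro e hed _hc'e hea
      exact absurd (H e (hdom_trans e hed (hea.2.trans_le lab).le) hea.1).2
        (not_lt.mpr hea.2.le)

end SCApprovalProfile
end

section
/- In a single-crossing approval profile, let a, c' ∈ C and voter intervals [i,j], [i',j'] satisfy the usable-set preconditions: c' ∈ Dom(a) ∪ {a}, [i,j] ⊆ A(a) ∩ [i',j'] and [i',j'] ⊆ A(c'). Then for every voter i* ∈ [i, j−1] it holds that U(a,i,j,c',i',j') = U(a,i,i*,c',i',j') ∪ U(a,i*+1,j,c',i',j'). -/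
namespace SCApprovalProfile

/-- Under the usable-set preconditions, the usable set of an interval
`[i,j]` is the union of the usable sets of `[i,i*]` and `[i*+1,j]`, for every
`i* ∈ [i, j−1]`. -/
theorem uset_split
    {n : ℕ} {C : Type} [Fintype C] [DecidableEq C] (hn : 0 < n)
    (P : SCApprovalProfile n C)
    (a c' : C) (i j i' j' : ℕ)
    (hpre1 : P.Dominates c' a ∨ c' = a)
    (hpre2 : Finset.Icc i j ⊆ P.app a ∩ Finset.Icc i' j')
    (hpre3 : Finset.Icc i' j' ⊆ P.app c')
    (iStar : ℕ) (h1 : i ≤ iStar) (h2 : iStar < j) :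
    P.USet a i j c' i' j' =
      P.USet a i iStar c' i' j' ∪ P.USet a (iStar + 1) j c' i' j' := by
  have hij : i ≤ j := le_of_lt (lt_of_le_of_lt h1 h2)
  have himem : i ∈ Finset.Icc i j := Finset.mem_Icc.mpr ⟨le_rfl, hij⟩
  have hi' : i' ≤ i := by
    have h := hpre2 himem
    rw [Finset.mem_inter, Finset.mem_Icc] at h
    exact h.2.1
  have pre2L : Finset.Icc i iStar ⊆ P.app a ∩ Finset.Icc i' j' := fun y hy =>
    hpre2 (Finset.mem_Icc.mpr ⟨(Finset.mem_Icc.mp hy).1,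
      le_trans (Finset.mem_Icc.mp hy).2 h2.le⟩)
  have pre2R : Finset.Icc (iStar + 1) j ⊆ P.app a ∩ Finset.Icc i' j' := fun y hy =>
    hpre2 (Finset.mem_Icc.mpr ⟨le_trans (le_trans h1 (Nat.le_succ _))
      (Finset.mem_Icc.mp hy).1, (Finset.mem_Icc.mp hy).2⟩)
  ext x
  simp only [USet, Set.mem_setOf_eq, Set.mem_union]
  constructor
  · rintro ⟨-, hdom, ⟨v, hv⟩, hcase⟩
    rw [Finset.mem_inter, Finset.mem_Icc] at hv
    obtain ⟨⟨hvi, hvj⟩, hva⟩ := hv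
    have hlmem : P.leftmost x ∈ P.app x := Finset.min'_mem _ _
    have hlv : P.leftmost x ≤ v := Finset.min'_le _ _ hva
    rcases hcase with hc1 | hc2 | hc3
    · by_cases hle : P.leftmost x ≤ iStar
      · refine Or.inl ⟨⟨hpre1, pre2L, hpre3⟩, hdom, ⟨P.leftmost x, ?_⟩, Or.inl hc1⟩
        rw [Finset.mem_inter, Finset.mem_Icc]
        exact ⟨⟨hc1, hle⟩, hlmem⟩
      · refine Or.inr ⟨⟨hpre1, pre2R, hpre3⟩, hdom, ⟨v, ?_⟩,
          Or.inl (Nat.succ_le_of_lt (lt_of_not_ge hle))⟩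
        rw [Finset.mem_inter, Finset.mem_Icc]
        exact ⟨⟨le_trans (Nat.succ_le_of_lt (lt_of_not_ge hle)) hlv, hvj⟩, hva⟩
    · have hia : i ∈ P.app x :=
        P.app_interval x (P.leftmost x) i v hlmem hva hc2.2.1.le hvi
      refine Or.inl ⟨⟨hpre1, pre2L, hpre3⟩, hdom, ⟨i, ?_⟩, Or.inr (Or.inl hc2)⟩
      rw [Finset.mem_inter, Finset.mem_Icc]
      exact ⟨⟨le_rfl, h1⟩, hia⟩
    · have hia : i ∈ P.app x :=
        P.app_interval x (P.leftmost x) i v hlmem hva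
          (le_trans hc3.1.le hi') hvi
      refine Or.inl ⟨⟨hpre1, pre2L, hpre3⟩, hdom, ⟨i, ?_⟩, Or.inr (Or.inr hc3)⟩
      rw [Finset.mem_inter, Finset.mem_Icc]
      exact ⟨⟨le_rfl, h1⟩, hia⟩
  · rintro (⟨-, hdom, ⟨v, hv⟩, hcase⟩ | ⟨-, hdom, ⟨v, hv⟩, hcase⟩)
    · rw [Finset.mem_inter, Finset.mem_Icc] at hv
      refine ⟨⟨hpre1, hpre2, hpre3⟩, hdom, ⟨v, ?_⟩, hcase⟩
      rw [Finset.mem_inter, Finset.mem_Icc]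
      exact ⟨⟨hv.1.1, le_trans hv.1.2 h2.le⟩, hv.2⟩
    · rw [Finset.mem_inter, Finset.mem_Icc] at hv
      refine ⟨⟨hpre1, hpre2, hpre3⟩, hdom, ⟨v, ?_⟩, ?_⟩
      · rw [Finset.mem_inter, Finset.mem_Icc]
        exact ⟨⟨le_trans (le_trans h1 (Nat.le_succ _)) hv.1.1, hv.1.2⟩, hv.2⟩
      · rcases hcase with hc1 | hc2 | hc3
        · exact Or.inl (le_trans (le_trans h1 (Nat.le_succ _)) hc1)
        · by_cases hle : i ≤ P.leftmost x
          · exact Or.inl hle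
          · exact Or.inr (Or.inl ⟨hc2.1, lt_of_not_ge hle, hc2.2.2⟩)
        · exact Or.inr (Or.inr hc3)

end SCApprovalProfile
end

section
/- (Continuous block property for single-crossing approval preferences.) Let the alternatives c_1,…,c_m of a single-crossing approval profile be indexed so that the sequence leftmost(c_1),…,leftmost(c_m) is nondecreasing and, among alternatives with equal leftmost, the sequence rightmost is nonincreasing. Let W ⊆ {c_1,…,c_m} with |W| = k and let σ*: V → W be any assignment. Then there exists an assignment σ: V → W with ρ(σ) ≤ ρ(σ*) such that: (i) for each alternative c ∈ W, the set σ⁻¹(c) is an interval of consecutive voters; and (ii) for all voters u < v with σ(u) = c_i and σ(v) = c_j, it holds that i ≤ j (with i < j whenever σ(u) ≠ σ(v)). -/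
namespace SCApprovalProfile

/-- continuous block property for single-crossing approval
preferences. With the alternatives `c_0,…,c_{m−1}` ordered nondecreasingly by
`leftmost` (and, among equal `leftmost`, nonincreasingly by `rightmost`), every
assignment `σ*` of the voters to a committee `W` of size `k` can be replaced by an
assignment `σ` to `W` of no larger misrepresentation, in which each alternative is
assigned an interval of consecutive voters and the assigned alternatives appear in
increasing index order along the voter order. -/
theorem continuous_block_property
    {n m k : ℕ} (hn : 0 < n) (hm : 0 < m) (hk : 0 < k)
    (P : SCApprovalProfile n (Fin m))
    (hsort : ∀ p q : Fin m, p ≤ q →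
      P.leftmost p ≤ P.leftmost q ∧
      (P.leftmost p = P.leftmost q → P.rightmost q ≤ P.rightmost p))
    (W : Finset (Fin m)) (hW : W.card = k)
    (σstar : ℕ → Fin m) (hσstar : ∀ v ∈ Finset.Icc 1 n, σstar v ∈ W) :
    ∃ σ : ℕ → Fin m,
      (∀ v ∈ Finset.Icc 1 n, σ v ∈ W) ∧
      (∑ v ∈ Finset.Icc 1 n, (if v ∈ P.app (σ v) then 0 else 1)) ≤
        (∑ v ∈ Finset.Icc 1 n, (if v ∈ P.app (σstar v) then 0 else 1)) ∧
      (∀ c : Fin m, ∀ u v w : ℕ, u ∈ Finset.Icc 1 n → w ∈ Finset.Icc 1 n →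
        σ u = c → σ w = c → u ≤ v → v ≤ w → σ v = c) ∧
      (∀ u v : ℕ, u ∈ Finset.Icc 1 n → v ∈ Finset.Icc 1 n → u < v →
        σ u ≤ σ v ∧ (σ u ≠ σ v → σ u < σ v)) := by
  classical
  have hWne : W.Nonempty := Finset.card_pos.mp (by omega)
  set S : ℕ → Finset (Fin m) := fun v => W.filter (fun c => v ≤ P.rightmost c) with hS
  set σ : ℕ → Fin m :=
    fun v => if h : (S v).Nonempty then (S v).min' h else W.max' hWne with hσ
  have hmemW : ∀ v, σ v ∈ W := by
    intro v
    by_cases h : (S v).Nonempty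
    · simp only [hσ, dif_pos h]
      exact (Finset.mem_filter.mp ((S v).min'_mem h)).1
    · simp only [hσ, dif_neg h]
      exact W.max'_mem hWne
  have hmono : ∀ u v : ℕ, u ≤ v → σ u ≤ σ v := by
    intro u v huv
    have hsub : S v ⊆ S u := by
      intro c hc
      rcases Finset.mem_filter.mp hc with ⟨hcW, hcr⟩
      exact Finset.mem_filter.mpr ⟨hcW, le_trans huv hcr⟩
    by_cases h : (S v).Nonempty
    · have hu : (S u).Nonempty := h.mono hsub
      simp only [hσ, dif_pos h, dif_pos hu]
      exact Finset.min'_le _ _ (hsub ((S v).min'_mem h))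
    · simp only [hσ, dif_neg h]
      exact W.le_max' _ (hmemW u)
  have hcover : ∀ v : ℕ, ∀ c : Fin m, c ∈ W → v ∈ P.app c → v ∈ P.app (σ v) := by
    intro v c hcW hvc
    have hcS : c ∈ S v :=
      Finset.mem_filter.mpr ⟨hcW, Finset.le_max' _ _ hvc⟩
    have hne : (S v).Nonempty := ⟨c, hcS⟩
    have hσv : σ v = (S v).min' hne := by simp only [hσ, dif_pos hne]
    have hdle : σ v ≤ c := hσv ▸ Finset.min'_le _ _ hcS
    have hleft : P.leftmost (σ v) ≤ P.leftmost c := (hsort _ _ hdle).1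
    have hlc : P.leftmost c ≤ v := Finset.min'_le _ _ hvc
    have hright : v ≤ P.rightmost (σ v) := by
      have := (S v).min'_mem hne
      rw [← hσv] at this
      exact (Finset.mem_filter.mp this).2
    exact P.app_interval (σ v) (P.leftmost (σ v)) v (P.rightmost (σ v))
      ((P.app (σ v)).min'_mem _) ((P.app (σ v)).max'_mem _)
      (le_trans hleft hlc) hright
  refine ⟨σ, fun v _ => hmemW v, ?_, ?_, ?_⟩
  · apply Finset.sum_le_sum
    intro v hv
    by_cases hcv : ∃ c ∈ W, v ∈ P.app c
    · obtain ⟨c, hcW, hvc⟩ := hcv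
      have := hcover v c hcW hvc
      simp [this]
    · have h1 : v ∉ P.app (σstar v) := fun h => hcv ⟨_, hσstar v hv, h⟩
      rw [if_neg h1]
      split <;> omega
  · intro c u v w _ _ hσu hσw huv hvw
    have h1 : σ u ≤ σ v := hmono u v huv
    have h2 : σ v ≤ σ w := hmono v w hvw
    rw [hσu] at h1
    rw [hσw] at h2
    exact le_antisymm h2 h1
  · intro u v _ _ huv
    exact ⟨hmono u v huv.le, fun hne => lt_of_le_of_ne (hmono u v huv.le) hne⟩

end SCApprovalProfile
end
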